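/- arXiv:1501.07318 — 3 statements merged into one kernel-verified Lean document; each statement's English description precedes it below -/
import Mathlib

section
/- For u ≥ 1 a positive integer and λ ∈ ℂ, one has Σ_{ℓ=0}^{u+1} C((λ-u)/2 - 1, ℓ)·C(u+1+ℓ, ℓ)·C(2(u+1), u+1-ℓ) = C(2(u+1), u+1) · C((λ+u)/2, u+1). In particular this expression vanishes when λ ∈ {u, u-2, …, -u+2, -u}. -/
/-!
Since `C(u+1+ℓ, ℓ) C(2(u+1), u+1-ℓ) = C(2(u+1), u+1) C(u+1, u+1-ℓ)`, the sum is `C(2(u+1), u+1)`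
times a Vandermonde convolution `Σ_ℓ C(a, ℓ) C(u+1, u+1-ℓ) = C(a+u+1, u+1)` with
`a = (λ-u)/2 - 1`. At `λ = u - 2j` the upper argument `(λ+u)/2 = u - j` is a natural number
below `u + 1`, so the binomial coefficient vanishes.
-/

/-- Generalized binomial coefficient `C(x, n) = x(x-1)⋯(x-n+1)/n!` for `x : ℂ`. -/
noncomputable def gchoose (x : ℂ) (n : ℕ) : ℂ :=
  (∏ i ∈ Finset.range n, (x - i)) / (n.factorial : ℂ)

open Finset

theorem gchoose_eq_ringChoose (x : ℂ) (n : ℕ) : gchoose x n = Ring.choose x n := by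
  rw [Ring.choose_eq_smul, ← Polynomial.aeval_eq_smeval, ← Polynomial.eval_map_algebraMap,
    descPochhammer_map, descPochhammer_eval_eq_prod_range, gchoose, smul_eq_mul, div_eq_inv_mul]

theorem Ring.sum_range_choose_mul_natChoose {R : Type*} [CommRing R] [BinomialRing R]
    (a : R) (m n : ℕ) :
    ∑ ℓ ∈ range (n + 1), Ring.choose a ℓ * (m.choose (n - ℓ) : R) = Ring.choose (a + m) n := by
  rw [Ring.add_choose_eq n (Commute.all a m), Nat.sum_antidiagonal_eq_sum_range_succ_mk]
  simp only [Ring.choose_natCast]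

theorem Nat.add_choose_mul_two_mul_choose {n ℓ : ℕ} (h : ℓ ≤ n) :
    (n + ℓ).choose ℓ * (2 * n).choose (n - ℓ) = (2 * n).choose n * n.choose ℓ := by
  have trinomial := Nat.choose_mul (n := 2 * n) (k := n) (s := n - ℓ) (by omega)
  rw [show 2 * n - (n - ℓ) = n + ℓ by omega, show n - (n - ℓ) = ℓ by omega,
    Nat.choose_symm h] at trinomial
  rw [trinomial, mul_comm]

theorem stmt3_general (u : ℕ) (lam : ℂ) :
    (∑ ℓ ∈ Finset.range (u + 2),
        gchoose ((lam - u) / 2 - 1) ℓ * ((u + 1 + ℓ).choose ℓ : ℂ)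
          * ((2 * (u + 1)).choose (u + 1 - ℓ) : ℂ))
      = ((2 * (u + 1)).choose (u + 1) : ℂ) * gchoose ((lam + u) / 2) (u + 1)
    ∧ ∀ j : ℕ, j ≤ u → lam = (u : ℂ) - 2 * j →
        (∑ ℓ ∈ Finset.range (u + 2),
          gchoose ((lam - u) / 2 - 1) ℓ * ((u + 1 + ℓ).choose ℓ : ℂ)
            * ((2 * (u + 1)).choose (u + 1 - ℓ) : ℂ)) = 0 := by
  have closed_form : (∑ ℓ ∈ Finset.range (u + 2),
        gchoose ((lam - u) / 2 - 1) ℓ * ((u + 1 + ℓ).choose ℓ : ℂ)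
          * ((2 * (u + 1)).choose (u + 1 - ℓ) : ℂ))
      = ((2 * (u + 1)).choose (u + 1) : ℂ) * gchoose ((lam + u) / 2) (u + 1) := by
    have factor_out : ∀ ℓ ∈ range (u + 2),
        gchoose ((lam - u) / 2 - 1) ℓ * ((u + 1 + ℓ).choose ℓ : ℂ)
            * ((2 * (u + 1)).choose (u + 1 - ℓ) : ℂ)
          = ((2 * (u + 1)).choose (u + 1) : ℂ)
            * (gchoose ((lam - u) / 2 - 1) ℓ * ((u + 1).choose (u + 1 - ℓ) : ℂ)) := by
      intro ℓ hℓ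
      have hle : ℓ ≤ u + 1 := Nat.lt_succ_iff.mp (mem_range.mp hℓ)
      rw [mul_assoc, ← Nat.cast_mul, Nat.add_choose_mul_two_mul_choose hle, Nat.cast_mul,
        Nat.choose_symm hle]
      ring
    rw [sum_congr rfl factor_out, ← mul_sum]
    simp only [gchoose_eq_ringChoose]
    rw [Ring.sum_range_choose_mul_natChoose]
    congr 2
    push_cast
    ring
  refine ⟨closed_form, fun j hj hlam => ?_⟩
  have hnat : (lam + u) / 2 = ((u - j : ℕ) : ℂ) := by
    rw [hlam, Nat.cast_sub hj]
    ring
  rw [closed_form, hnat, gchoose_eq_ringChoose, Ring.choose_natCast,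
    Nat.choose_eq_zero_of_lt (by omega : u - j < u + 1)]
  simp

theorem stmt3 (u : ℕ) (hu : 1 ≤ u) (lam : ℂ) :
    (∑ ℓ ∈ Finset.range (u + 2),
        gchoose ((lam - u) / 2 - 1) ℓ * ((u + 1 + ℓ).choose ℓ : ℂ)
          * ((2 * (u + 1)).choose (u + 1 - ℓ) : ℂ))
      = ((2 * (u + 1)).choose (u + 1) : ℂ) * gchoose ((lam + u) / 2) (u + 1)
    ∧ ∀ j : ℕ, j ≤ u → lam = (u : ℂ) - 2 * j →
        (∑ ℓ ∈ Finset.range (u + 2),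
          gchoose ((lam - u) / 2 - 1) ℓ * ((u + 1 + ℓ).choose ℓ : ℂ)
            * ((2 * (u + 1)).choose (u + 1 - ℓ) : ℂ)) = 0 :=
  stmt3_general u lam
end

section
/- For the partition μ = [v^m, (v-1)^{u-1-m}] (m parts equal to v followed by u-1-m parts equal to v-1, with 0 ≤ m ≤ u-1, v ≥ 2), the specialisation of the dual Jack polynomial factors as Ξ_X(Q_μ^{(t)}) = ∏_{j=1}^{v-1}[∏_{i=1}^{m} (X + tj - i + 1)/(2u-1-i-t(j-1)) · ∏_{i=m+1}^{u-1} (X + tj - i + 1)/(2u-1-i-tj)] · ∏_{i=1}^{m} (X + u - i + 1)/(t + m - i), when X is set to αp + t with α² = 2t and t = u/v. -/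
/-- The partition `μ = [v^m, (v-1)^{u-1-m}]` as a one-indexed part function. -/
def stairLam (u v m : ℕ) : ℕ → ℕ :=
  fun i => if 1 ≤ i ∧ i ≤ m then v else if m < i ∧ i ≤ u - 1 then v - 1 else 0

/-- The conjugate partition: `μ'_j = #{i : μ_i ≥ j}`. -/
def stairConj (u v m : ℕ) : ℕ → ℕ :=
  fun j => ((Finset.Icc 1 (u - 1)).filter (fun i => j ≤ stairLam u v m i)).card

/-!
Every column `j < v` of `μ` has full height `u - 1`, so the leg of `(i, j)` there is `u - 1 - i`,
while the last column consists of the first `m` rows only. With `t v = u` the arm term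
`t (μ_i - j + 1)` becomes `u - t (j - 1)` in the long rows and `u - t j` in the short ones, so each
row's product is the advertised one; exchanging the two products finishes the proof.
-/

open Finset

/-- The factor of the box `(i, j)` in the hook-product formula for `Ξ_X(Q_λ^{(t)})`, where
`lam` and `conj` are the part functions of `λ` and of its conjugate. -/
def hookBoxFactor {K : Type*} [Field K] (lam conj : ℕ → ℕ) (X t : K) (i j : ℕ) : K :=
  (X + t * ((j : K) - 1) - ((i : K) - 1)) /
    (t * (((lam i - j : ℕ) : K) + 1) + ((conj j - i : ℕ) : K))

namespace Stair

variable {u v m i j : ℕ}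

lemma lam_of_le (hi : 1 ≤ i) (him : i ≤ m) : stairLam u v m i = v := by
  simp [stairLam, hi, him]

lemma lam_of_lt (hmi : m < i) (hiu : i ≤ u - 1) : stairLam u v m i = v - 1 := by
  simp only [stairLam]
  rw [if_neg (by omega), if_pos ⟨hmi, hiu⟩]

lemma pred_le_lam (hi : 1 ≤ i) (hiu : i ≤ u - 1) : v - 1 ≤ stairLam u v m i := by
  rcases le_or_gt i m with him | hmi
  · rw [lam_of_le hi him]; omega
  · rw [lam_of_lt hmi hiu]

lemma conj_of_le_pred (hj : j ≤ v - 1) : stairConj u v m j = u - 1 := by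
  have hfull : (Icc 1 (u - 1)).filter (fun i => j ≤ stairLam u v m i) = Icc 1 (u - 1) :=
    filter_true_of_mem fun i hi => by
      rw [mem_Icc] at hi
      exact hj.trans (pred_le_lam hi.1 hi.2)
  simp [stairConj, hfull]

lemma conj_self (hv : 1 ≤ v) (hm : m ≤ u - 1) : stairConj u v m v = m := by
  have hrows : (Icc 1 (u - 1)).filter (fun i => v ≤ stairLam u v m i) = Icc 1 m := by
    ext i
    simp only [mem_filter, mem_Icc]
    constructor
    · rintro ⟨⟨hi, hiu⟩, hvi⟩
      refine ⟨hi, not_lt.mp fun hmi => ?_⟩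
      rw [lam_of_lt hmi hiu] at hvi
      omega
    · rintro ⟨hi, him⟩
      exact ⟨⟨hi, him.trans hm⟩, (lam_of_le hi him).ge⟩
  simp [stairConj, hrows]

variable {K : Type*} [Field K] (x t : K)

lemma hookBoxFactor_of_lt (hi : 1 ≤ i) (hiu : i ≤ u - 1) (hj : j ≤ v - 1) :
    hookBoxFactor (stairLam u v m) (stairConj u v m) (x + t) t i j =
      (x + t * j - i + 1) / (t * ((stairLam u v m i : K) - j + 1) + u - 1 - i) := by
  have hjlam : j ≤ stairLam u v m i := hj.trans (pred_le_lam hi hiu)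
  rw [hookBoxFactor, conj_of_le_pred hj, Nat.sub_sub, Nat.cast_sub hjlam,
    Nat.cast_sub (by omega : 1 + i ≤ u)]
  push_cast
  ring_nf

lemma prod_hookBoxFactor_long_row (hv : 1 ≤ v) (hm : m ≤ u - 1) (ht : t * v = u)
    (hi : 1 ≤ i) (him : i ≤ m) :
    ∏ j ∈ Icc 1 (stairLam u v m i),
        hookBoxFactor (stairLam u v m) (stairConj u v m) (x + t) t i j =
      (∏ j ∈ Icc 1 (v - 1), (x + t * j - i + 1) / (2 * (u : K) - 1 - i - t * ((j : K) - 1))) *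
        ((x + u - i + 1) / (t + m - i)) := by
  have hcols : Icc 1 v = insert v (Icc 1 (v - 1)) := by
    ext j; simp only [mem_insert, mem_Icc]; omega
  rw [lam_of_le hi him, hcols, prod_insert (by simp; omega), mul_comm]
  congr 1
  · refine prod_congr rfl fun j hj => ?_
    rw [hookBoxFactor_of_lt x t hi (him.trans hm) (mem_Icc.mp hj).2, lam_of_le hi him]
    congr 1
    linear_combination ht
  · rw [hookBoxFactor, lam_of_le hi him, Nat.sub_self, conj_self hv hm, Nat.cast_sub him]
    push_cast
    congr 1
    · linear_combination ht
    · ring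

lemma prod_hookBoxFactor_short_row (ht : t * v = u) (hmi : m < i) (hiu : i ≤ u - 1) :
    ∏ j ∈ Icc 1 (stairLam u v m i),
        hookBoxFactor (stairLam u v m) (stairConj u v m) (x + t) t i j =
      ∏ j ∈ Icc 1 (v - 1), (x + t * j - i + 1) / (2 * (u : K) - 1 - i - t * j) := by
  rw [lam_of_lt hmi hiu]
  refine prod_congr rfl fun j hj => ?_
  have hj' := mem_Icc.mp hj
  rw [hookBoxFactor_of_lt x t (by omega) hiu hj'.2, lam_of_lt hmi hiu,
    Nat.cast_sub (by omega : 1 ≤ v)]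
  congr 1
  push_cast
  linear_combination ht

end Stair

theorem stmt8_general (u v m : ℕ) (hv : 2 ≤ v)
    (hm : m ≤ u - 1) (t α p : ℂ) (ht : t = (u : ℂ) / (v : ℂ)) :
    (∏ i ∈ Finset.Icc 1 (u - 1), ∏ j ∈ Finset.Icc 1 (stairLam u v m i),
        ((α * p + t) + t * ((j : ℂ) - 1) - ((i : ℂ) - 1)) /
          (t * (((stairLam u v m i - j : ℕ) : ℂ) + 1) + ((stairConj u v m j - i : ℕ) : ℂ)))
      = (∏ j ∈ Finset.Icc 1 (v - 1),
          ((∏ i ∈ Finset.Icc 1 m,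
              (α * p + t * j - i + 1) / (2 * (u : ℂ) - 1 - i - t * ((j : ℂ) - 1))) *
           (∏ i ∈ Finset.Icc (m + 1) (u - 1),
              (α * p + t * j - i + 1) / (2 * (u : ℂ) - 1 - i - t * j)))) *
        ∏ i ∈ Finset.Icc 1 m, (α * p + (u : ℂ) - i + 1) / (t + (m : ℂ) - i) := by
  have htv : t * v = u := by
    rw [ht]
    exact div_mul_cancel₀ _ (Nat.cast_ne_zero.mpr (by omega))
  have hrows : Icc 1 (u - 1) = Icc 1 m ∪ Icc (m + 1) (u - 1) := by
    ext i; simp only [mem_union, mem_Icc]; omega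
  have hdisj : Disjoint (Icc 1 m) (Icc (m + 1) (u - 1)) :=
    disjoint_left.mpr fun i h1 h2 => by simp only [mem_Icc] at h1 h2; omega
  change ∏ i ∈ Icc 1 (u - 1), ∏ j ∈ Icc 1 (stairLam u v m i),
      hookBoxFactor (stairLam u v m) (stairConj u v m) (α * p + t) t i j = _
  rw [hrows, prod_union hdisj,
    prod_congr rfl fun i hi => Stair.prod_hookBoxFactor_long_row _ t (by omega) hm htv
      (mem_Icc.mp hi).1 (mem_Icc.mp hi).2,
    prod_congr rfl fun i hi => Stair.prod_hookBoxFactor_short_row _ t htv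
      (mem_Icc.mp hi).1 (mem_Icc.mp hi).2,
    prod_mul_distrib, prod_mul_distrib, prod_comm, prod_comm (s := Icc (m + 1) (u - 1))]
  ring

theorem stmt8 (u v m : ℕ) (hu : 2 ≤ u) (hv : 2 ≤ v) (hcop : Nat.Coprime u v)
    (hm : m ≤ u - 1) (t α p : ℂ) (ht : t = (u : ℂ) / (v : ℂ)) (hα : α ^ 2 = 2 * t) :
    (∏ i ∈ Finset.Icc 1 (u - 1), ∏ j ∈ Finset.Icc 1 (stairLam u v m i),
        ((α * p + t) + t * ((j : ℂ) - 1) - ((i : ℂ) - 1)) /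
          (t * (((stairLam u v m i - j : ℕ) : ℂ) + 1) + ((stairConj u v m j - i : ℕ) : ℂ)))
      = (∏ j ∈ Finset.Icc 1 (v - 1),
          ((∏ i ∈ Finset.Icc 1 m,
              (α * p + t * j - i + 1) / (2 * (u : ℂ) - 1 - i - t * ((j : ℂ) - 1))) *
           (∏ i ∈ Finset.Icc (m + 1) (u - 1),
              (α * p + t * j - i + 1) / (2 * (u : ℂ) - 1 - i - t * j)))) *
        ∏ i ∈ Finset.Icc 1 m, (α * p + (u : ℂ) - i + 1) / (t + (m : ℂ) - i) :=
  stmt8_general u v m hv hm t α p ht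
end

section
/- Let g(u) be defined by g(0)=0, g(1)=1 and g(u+2) = ((2u+1)λ/(u+1)²)·g(u+1) − ((4tΔ+1−u²)/(u+1)²)·g(u), and set Δ_{r,0} = (r²-1)/(4t) for a positive integer r. Then for every u ≥ 1, r with 1 ≤ r ≤ u-1, and λ ∈ {r-1, r-3, …, -r+3, -r+1}, one has g(u)(λ, Δ_{r,0}) = 0. -/
/-!
Write `r = m + j + 1`, so that `λ = r - 1 - 2j = m - j` and `4tΔ_{r,0} = (m + j + 1)² - 1`.
At this point `g(n+1)` equals the alternating sum `∑ₖ (-1)ᵏ C(n,k) C(j,k) C(m,n-k)`: both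
sides start with `1, m - j`, and the sum satisfies the recursion of `g`, as a creative-telescoping
(Zeilberger) certificate shows. For `n > m + j` every term of the sum vanishes, since either
`k > j` or `n - k > m`; this is the range `u = n + 1 ≥ r + 1`.
-/

open MvPolynomial

/-- The polynomials `g(u) ∈ ℂ[λ, Δ]` (with `X 0 = λ`, `X 1 = Δ`) defined by
`g(0)=0`, `g(1)=1` and the recursion
`g(u+2) = ((2u+1)λ/(u+1)²)·g(u+1) − ((4tΔ + 1 − u²)/(u+1)²)·g(u)`. -/
noncomputable def gpoly (t : ℂ) : ℕ → MvPolynomial (Fin 2) ℂ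
  | 0 => 0
  | 1 => 1
  | (u + 2) =>
      C ((2 * (u : ℂ) + 1) / ((u : ℂ) + 1) ^ 2) * X 0 * gpoly t (u + 1)
        - C ((((u : ℂ) + 1) ^ 2)⁻¹) * (C (4 * t) * X 1 + C (1 - (u : ℂ) ^ 2)) * gpoly t u

open Finset

section Ring

variable {K : Type*} [Ring K]

def binomTerm (j m n k : ℕ) : K := (-1) ^ k * n.choose k * j.choose k * m.choose (n - k)

def binomSum (j m n : ℕ) : K := ∑ k ∈ range (n + 1), binomTerm j m n k

def binomRecTerm (j m v k : ℕ) : K :=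
  (v + 2) ^ 2 * binomTerm j m (v + 2) k - (2 * v + 3) * (m - j) * binomTerm j m (v + 1) k
    + ((m + j + 1) ^ 2 - (v + 1) ^ 2) * binomTerm j m v k

/-- Zeilberger's certificate for `binomRecTerm`, rescaled by `(v + 1) * (m + 1)` so that it is
a polynomial multiple of a product of binomial coefficients. -/
def binomCert (j m v k : ℕ) : K :=
  (k - j) * ((v + 1 - k) * ((v + 1) * (2 * v + 3 - k) - j * (v + 1 - k))
      - (m + 1) * (v + 1 + (2 * v + 2 - k) ^ 2)) *
    ((-1) ^ k * (v + 1).choose k * j.choose k * (m + 1).choose (v + 1 - k))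

theorem binomTerm_eq_zero_of_lt {j m n k : ℕ} (h : n < k) : binomTerm (K := K) j m n k = 0 := by
  simp [binomTerm, Nat.choose_eq_zero_of_lt h]

theorem binomSum_eq_sum_range {j m n N : ℕ} (h : n < N) :
    binomSum j m n = ∑ k ∈ range N, binomTerm (K := K) j m n k := by
  refine sum_subset (range_subset_range.mpr h) fun k _ hk => binomTerm_eq_zero_of_lt ?_
  simpa using hk

theorem binomSum_eq_zero_of_lt {j m n : ℕ} (h : m + j < n) : binomSum (K := K) j m n = 0 := by
  refine sum_eq_zero fun k _ => ?_
  rcases le_or_gt k j with hkj | hjk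
  · simp [binomTerm, Nat.choose_eq_zero_of_lt (by omega : m < n - k)]
  · simp [binomTerm, Nat.choose_eq_zero_of_lt hjk]

end Ring

section Field

variable {K : Type*} [Field K] [CharZero K]

theorem cast_choose_succ_right (n k : ℕ) :
    (n.choose (k + 1) : K) = (n - k) / (k + 1) * n.choose k := by
  rcases le_or_gt k n with hkn | hnk
  · have h := congrArg (Nat.cast : ℕ → K) (Nat.choose_succ_right_eq n k)
    push_cast [Nat.cast_sub hkn] at h
    field_simp
    linear_combination h
  · simp [Nat.choose_eq_zero_of_lt hnk, Nat.choose_eq_zero_of_lt (Nat.lt_succ_of_lt hnk)]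

theorem cast_choose_succ_succ (n k : ℕ) :
    ((n + 1).choose (k + 1) : K) = (n + 1) / (k + 1) * n.choose k := by
  have h := congrArg (Nat.cast : ℕ → K) (Nat.add_one_mul_choose_eq n k)
  push_cast at h
  field_simp
  linear_combination -h

theorem cast_choose_eq_mul_choose_succ (n k : ℕ) :
    (n.choose k : K) = (n + 1 - k) / (n + 1) * (n + 1).choose k := by
  rcases le_or_gt k (n + 1) with hkn | hnk
  · have h := congrArg (Nat.cast : ℕ → K) (Nat.choose_mul_succ_eq n k)
    push_cast [Nat.cast_sub hkn] at h
    field_simp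
    linear_combination h
  · simp [Nat.choose_eq_zero_of_lt hnk, Nat.choose_eq_zero_of_lt (Nat.lt_of_succ_lt hnk)]

theorem mul_binomRecTerm_zero (j m v : ℕ) :
    ((v : K) + 1) * (m + 1) * binomRecTerm j m v 0 = binomCert j m v 0 := by
  have m1 : (m.choose (v + 1) : K) = (m - v) / (v + 1) * m.choose v := cast_choose_succ_right m v
  have m2 : (m.choose (v + 2) : K) = (m - v - 1) / (v + 2) * m.choose (v + 1) := by
    rw [cast_choose_succ_right]; push_cast; ring
  have m3 : ((m + 1).choose (v + 1) : K) = (m + 1) / (v + 1) * m.choose v :=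
    cast_choose_succ_succ m v
  simp only [binomRecTerm, binomTerm, binomCert, Nat.choose_zero_right, Nat.sub_zero, m2, m3, m1]
  have h1 : (v : K) + 1 ≠ 0 := Nat.cast_add_one_ne_zero v
  have h2 : (v : K) + 2 ≠ 0 := by exact_mod_cast Nat.succ_ne_zero (v + 1)
  push_cast
  field_simp
  ring

theorem mul_binomRecTerm_succ_of_lt {j m v k : ℕ} (hk : k < v) :
    ((v : K) + 1) * (m + 1) * binomRecTerm j m v (k + 1)
      = binomCert j m v (k + 1) - binomCert j m v k := by
  obtain ⟨s, rfl⟩ : ∃ s, v = k + 1 + s := ⟨v - (k + 1), by omega⟩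
  simp only [binomRecTerm, binomTerm, binomCert, show k + 1 + s + 2 - (k + 1) = s + 2 by omega,
    show k + 1 + s + 1 - (k + 1) = s + 1 by omega, show k + 1 + s - (k + 1) = s by omega,
    show k + 1 + s + 1 - k = s + 2 by omega]
  have n1 : ((k + 1 + s + 1).choose (k + 1) : K)
      = (s + 2) / (k + 1) * (k + 1 + s + 1).choose k := by
    rw [cast_choose_succ_right]; push_cast; ring
  have n2 : ((k + 1 + s + 2).choose (k + 1) : K)
      = (k + s + 3) / (k + 1) * (k + 1 + s + 1).choose k := by
    rw [cast_choose_succ_succ]; push_cast; ring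
  have n3 : ((k + 1 + s).choose (k + 1) : K)
      = (s + 1) / (k + s + 2) * (k + 1 + s + 1).choose (k + 1) := by
    rw [cast_choose_eq_mul_choose_succ]; push_cast; ring
  have j1 : (j.choose (k + 1) : K) = (j - k) / (k + 1) * j.choose k := cast_choose_succ_right j k
  have m1 : (m.choose (s + 1) : K) = (m - s) / (s + 1) * m.choose s := cast_choose_succ_right m s
  have m2 : (m.choose (s + 2) : K) = (m - s - 1) / (s + 2) * m.choose (s + 1) := by
    rw [cast_choose_succ_right]; push_cast; ring
  have m3 : ((m + 1).choose (s + 1) : K) = (m + 1) / (s + 1) * m.choose s :=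
    cast_choose_succ_succ m s
  have m4 : ((m + 1).choose (s + 2) : K) = (m + 1) / (s + 2) * m.choose (s + 1) := by
    rw [cast_choose_succ_succ]; push_cast; ring
  -- every binomial coefficient is now a rational multiple of `C(v+1,k)`, `C(j,k)` or `C(m,s)`
  rw [n3, n2, n1, j1, m2, m4, m3, m1]
  have h1 : (k : K) + 1 ≠ 0 := Nat.cast_add_one_ne_zero k
  have h2 : (s : K) + 1 ≠ 0 := Nat.cast_add_one_ne_zero s
  have h3 : (s : K) + 2 ≠ 0 := by exact_mod_cast Nat.succ_ne_zero (s + 1)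
  have h4 : (k : K) + s + 2 ≠ 0 := by exact_mod_cast Nat.succ_ne_zero (k + s + 1)
  push_cast
  field_simp
  ring

theorem mul_binomRecTerm_succ_self (j m v : ℕ) :
    ((v : K) + 1) * (m + 1) * binomRecTerm j m v (v + 1)
      = binomCert j m v (v + 1) - binomCert j m v v := by
  have hj : (j.choose (v + 1) : K) = (j - v) / (v + 1) * j.choose v := cast_choose_succ_right j v
  simp only [binomRecTerm, binomTerm, binomCert, Nat.choose_self, Nat.choose_succ_self,
    Nat.choose_succ_self_right, show v + 2 = v + 1 + 1 from rfl, Nat.add_sub_cancel_left,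
    Nat.sub_self, Nat.choose_one_right, Nat.choose_zero_right, hj]
  have h1 : (v : K) + 1 ≠ 0 := Nat.cast_add_one_ne_zero v
  push_cast
  field_simp
  ring

theorem mul_binomRecTerm_succ_succ_self (j m v : ℕ) :
    ((v : K) + 1) * (m + 1) * binomRecTerm j m v (v + 2)
      = binomCert j m v (v + 2) - binomCert j m v (v + 1) := by
  have hj : (j.choose (v + 2) : K) = (j - v - 1) / (v + 2) * j.choose (v + 1) := by
    rw [cast_choose_succ_right]; push_cast; ring
  simp only [binomRecTerm, binomTerm, binomCert, Nat.choose_self, Nat.choose_succ_self,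
    Nat.choose_eq_zero_of_lt (by omega : v < v + 2), Nat.sub_self, Nat.choose_zero_right, hj]
  have h2 : (v : K) + 2 ≠ 0 := by exact_mod_cast Nat.succ_ne_zero (v + 1)
  push_cast
  field_simp
  ring

theorem mul_binomRecTerm_succ {j m v k : ℕ} (hk : k ≤ v + 1) :
    ((v : K) + 1) * (m + 1) * binomRecTerm j m v (k + 1)
      = binomCert j m v (k + 1) - binomCert j m v k := by
  rcases lt_trichotomy k v with hkv | rfl | hvk
  · exact mul_binomRecTerm_succ_of_lt hkv
  · exact mul_binomRecTerm_succ_self j m k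
  · obtain rfl : k = v + 1 := by omega
    exact mul_binomRecTerm_succ_succ_self j m v

theorem sum_binomRecTerm (j m v : ℕ) :
    ∑ k ∈ range (v + 3), binomRecTerm (K := K) j m v k = 0 := by
  have hvm : ((v : K) + 1) * (m + 1) ≠ 0 :=
    mul_ne_zero (Nat.cast_add_one_ne_zero v) (Nat.cast_add_one_ne_zero m)
  have hcert : binomCert (K := K) j m v (v + 2) = 0 := by simp [binomCert]
  refine (mul_eq_zero_iff_left hvm).mp ?_
  rw [mul_sum, sum_range_succ', mul_binomRecTerm_zero,
    sum_congr rfl fun k hk => mul_binomRecTerm_succ (Nat.lt_succ_iff.mp (mem_range.mp hk)),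
    sum_range_sub (binomCert j m v), hcert]
  ring

theorem binomSum_recurrence (j m v : ℕ) :
    (v + 2) ^ 2 * binomSum j m (v + 2)
      = (2 * v + 3) * (m - j) * binomSum j m (v + 1)
        - ((m + j + 1) ^ 2 - (v + 1) ^ 2) * binomSum (K := K) j m v := by
  have h := sum_binomRecTerm (K := K) j m v
  simp only [binomRecTerm, sum_add_distrib, sum_sub_distrib, ← mul_sum] at h
  rw [binomSum_eq_sum_range (by omega : v + 2 < v + 3),
    binomSum_eq_sum_range (by omega : v + 1 < v + 3), binomSum_eq_sum_range (by omega : v < v + 3)]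
  linear_combination h

end Field

theorem eval_gpoly_add_two (t : ℂ) (x : Fin 2 → ℂ) (n : ℕ) :
    ((n : ℂ) + 1) ^ 2 * eval x (gpoly t (n + 2))
      = (2 * n + 1) * x 0 * eval x (gpoly t (n + 1))
        - (4 * t * x 1 + 1 - n ^ 2) * eval x (gpoly t n) := by
  have hn : (n : ℂ) + 1 ≠ 0 := Nat.cast_add_one_ne_zero n
  simp only [gpoly, map_sub, map_mul, map_add, eval_C, eval_X]
  field_simp
  ring

theorem eval_gpoly_succ_eq_binomSum (t : ℂ) {j m : ℕ} {x : Fin 2 → ℂ} (hx0 : x 0 = m - j)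
    (hx1 : 4 * t * x 1 = (m + j + 1) ^ 2 - 1) (n : ℕ) :
    eval x (gpoly t (n + 1)) = binomSum j m n := by
  induction n using Nat.twoStepInduction with
  | zero => simp [gpoly, binomSum, binomTerm]
  | one => simp [gpoly, binomSum, binomTerm, sum_range_succ, hx0, sub_eq_add_neg]
  | more n ih₀ ih₁ =>
    have hn : ((n : ℂ) + 2) ^ 2 ≠ 0 :=
      pow_ne_zero 2 (by exact_mod_cast Nat.succ_ne_zero (n + 1))
    have hg := eval_gpoly_add_two t x (n + 1)
    have hF := binomSum_recurrence (K := ℂ) j m n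
    rw [ih₀, ih₁, hx0] at hg
    push_cast at hg
    refine mul_left_cancel₀ hn ?_
    linear_combination hg - hF - binomSum j m n * hx1

theorem stmt14_general (t : ℂ) (ht : t ≠ 0) (u r j : ℕ)
    (hr2 : r ≤ u - 1) (hj : j < r) :
    MvPolynomial.eval
      (fun i : Fin 2 => if i = 0 then ((r : ℂ) - 1 - 2 * j) else ((r : ℂ) ^ 2 - 1) / (4 * t))
      (gpoly t u) = 0 := by
  obtain ⟨m, rfl⟩ : ∃ m, r = m + j + 1 := ⟨r - j - 1, by omega⟩
  obtain ⟨n, rfl⟩ : ∃ n, u = n + 1 := ⟨u - 1, by omega⟩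
  have hx0 : ((m + j + 1 : ℕ) : ℂ) - 1 - 2 * j = m - j := by push_cast; ring
  have hx1 : 4 * t * ((((m + j + 1 : ℕ) : ℂ) ^ 2 - 1) / (4 * t)) = (m + j + 1) ^ 2 - 1 := by
    push_cast; field_simp
  rw [eval_gpoly_succ_eq_binomSum t (by simpa using hx0) (by simpa using hx1) n]
  exact binomSum_eq_zero_of_lt (by omega)

theorem stmt14 (t : ℂ) (ht : t ≠ 0) (u r j : ℕ) (hu : 1 ≤ u)
    (hr1 : 1 ≤ r) (hr2 : r ≤ u - 1) (hj : j < r) :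
    MvPolynomial.eval
      (fun i : Fin 2 => if i = 0 then ((r : ℂ) - 1 - 2 * j) else ((r : ℂ) ^ 2 - 1) / (4 * t))
      (gpoly t u) = 0 :=
  stmt14_general t ht u r j hr2 hj
end
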